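/- arXiv:1712.03008 — 6 statements merged into one kernel-verified Lean document; each statement's English description precedes it below -/
import Mathlib

section
/- Assume in addition that Q(e i) = 1 or Q(e i) = -1 for every i. Then for all finite subsets S, T of Fin N there exists κ ∈ R with κ = 1 or κ = -1 such that γ_S · γ_T = κ • γ_{S Δ T}, where S Δ T denotes the symmetric difference of S and T. -/
/-- The ordered product of Clifford generators `ι (e i)` over `i ∈ S`,
taken in increasing order of indices, with `γ_∅ = 1`. -/
noncomputable def gammaProd {R M : Type*} [CommRing R] [AddCommGroup M] [Module R M]
    (Q : QuadraticForm R M) {N : ℕ} (e : Fin N → M) (S : Finset (Fin N)) :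
    CliffordAlgebra Q :=
  ((S.sort (· ≤ ·)).map fun i => CliffordAlgebra.ι Q (e i)).prod

/-!
Multiplying `γ_U` on the left by a single generator `ι (e j)` gives `± γ_({j} ∆ U)`: moving
`ι (e j)` past the smaller generators of `U` costs one sign each, by orthogonality, and then
it either takes its place in front of the larger ones or meets `ι (e j)` itself, and
`ι (e j) ^ 2 = Q (e j) = ±1`. Peeling `γ_S` off one generator at a time from the left then
gives `γ_S * γ_T = ± γ_(S ∆ T)`.
-/

open CliffordAlgebra
open scoped symmDiff

theorem Finset.insert_eq_singleton_symmDiff {α : Type*} [DecidableEq α] {a : α}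
    {s : Finset α} (h : a ∉ s) : insert a s = {a} ∆ s := by
  rw [(Finset.disjoint_singleton_left.mpr h).symmDiff_eq_sup, Finset.sup_eq_union,
    Finset.insert_eq]

section Sign

variable {R : Type*} [Monoid R] [HasDistribNeg R] {κ κ' : R}

theorem neg_eq_one_or_neg_one (h : κ = 1 ∨ κ = -1) : -κ = 1 ∨ -κ = -1 := by
  rcases h with rfl | rfl <;> simp

theorem mul_eq_one_or_neg_one (h : κ = 1 ∨ κ = -1) (h' : κ' = 1 ∨ κ' = -1) :
    κ * κ' = 1 ∨ κ * κ' = -1 := by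
  rcases h with rfl | rfl <;> rcases h' with rfl | rfl <;> simp

end Sign

section GammaProd

variable {R M : Type*} [CommRing R] [AddCommGroup M] [Module R M]
  {Q : QuadraticForm R M} {N : ℕ} {e : Fin N → M}

@[simp]
theorem gammaProd_empty : gammaProd Q e ∅ = 1 := by
  simp [gammaProd]

@[simp]
theorem gammaProd_singleton (a : Fin N) : gammaProd Q e {a} = ι Q (e a) := by
  simp [gammaProd]

theorem gammaProd_insert_of_forall_lt {a : Fin N} {s : Finset (Fin N)}
    (ha : ∀ x ∈ s, a < x) : gammaProd Q e (insert a s) = ι Q (e a) * gammaProd Q e s := by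
  have ha' : a ∉ s := fun h => (ha a h).false
  rw [gammaProd, Finset.sort_insert _ (fun x hx => (ha x hx).le) ha', List.map_cons,
    List.prod_cons, gammaProd]

theorem exists_ι_mul_gammaProd_eq_smul_symmDiff {j : Fin N}
    (horth : ∀ i, i ≠ j → QuadraticMap.polar Q (e j) (e i) = 0)
    (hj : Q (e j) = 1 ∨ Q (e j) = -1) (U : Finset (Fin N)) :
    ∃ κ : R, (κ = 1 ∨ κ = -1) ∧ ι Q (e j) * gammaProd Q e U = κ • gammaProd Q e ({j} ∆ U) := by
  induction U using Finset.induction_on_min with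
  | empty =>
    refine ⟨1, .inl rfl, ?_⟩
    rw [gammaProd_empty, mul_one, one_smul, ← Finset.bot_eq_empty, symmDiff_bot,
      gammaProd_singleton]
  | insert a s ha ih =>
    have has : a ∉ s := fun h => (ha a h).false
    rw [gammaProd_insert_of_forall_lt ha, Finset.insert_eq_singleton_symmDiff has]
    rcases lt_trichotomy j a with hja | rfl | haj
    · have hjs : ∀ x ∈ insert a s, j < x :=
        (Finset.forall_mem_insert _ _ _).mpr ⟨hja, fun x hx => hja.trans (ha x hx)⟩
      refine ⟨1, .inl rfl, ?_⟩
      rw [one_smul, ← Finset.insert_eq_singleton_symmDiff has,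
        ← Finset.insert_eq_singleton_symmDiff fun h => (hjs j h).false,
        gammaProd_insert_of_forall_lt hjs, gammaProd_insert_of_forall_lt ha]
    · refine ⟨Q (e j), hj, ?_⟩
      rw [← mul_assoc, ι_sq_scalar, symmDiff_symmDiff_cancel_left, Algebra.smul_def]
    · obtain ⟨κ, hκ, hs⟩ := ih
      have hortho : Q.IsOrtho (e j) (e a) :=
        QuadraticMap.isOrtho_polarBilin.mp (horth a haj.ne)
      have has' : ∀ x ∈ {j} ∆ s, a < x := by
        intro x hx
        rcases Finset.mem_symmDiff.mp hx with ⟨hx, -⟩ | ⟨hx, -⟩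
        · exact (Finset.mem_singleton.mp hx) ▸ haj
        · exact ha x hx
      refine ⟨-κ, neg_eq_one_or_neg_one hκ, ?_⟩
      rw [ι_mul_ι_mul_of_isOrtho _ hortho, hs, mul_smul_comm, symmDiff_left_comm,
        ← Finset.insert_eq_singleton_symmDiff fun h => (has' a h).false,
        gammaProd_insert_of_forall_lt has', neg_smul]

end GammaProd

/-- if additionally `Q (e i) = ±1` for every `i`, then
`γ_S · γ_T = κ • γ_{S Δ T}` for some `κ = ±1`. -/
theorem gammaProd_mul_eq_symmDiff {R M : Type*} [CommRing R] [AddCommGroup M] [Module R M]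
    (Q : QuadraticForm R M) {N : ℕ} (e : Fin N → M)
    (horth : ∀ i j : Fin N, i ≠ j → QuadraticMap.polar Q (e i) (e j) = 0)
    (hnorm : ∀ i : Fin N, Q (e i) = 1 ∨ Q (e i) = -1)
    (S T : Finset (Fin N)) :
    ∃ κ : R, (κ = 1 ∨ κ = -1) ∧
      gammaProd Q e S * gammaProd Q e T = κ • gammaProd Q e (symmDiff S T) := by
  induction S using Finset.induction_on_min with
  | empty =>
    refine ⟨1, .inl rfl, ?_⟩
    rw [gammaProd_empty, one_mul, one_smul, ← Finset.bot_eq_empty, bot_symmDiff]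
  | insert a s ha ih =>
    obtain ⟨κ, hκ, hs⟩ := ih
    obtain ⟨κ', hκ', ha'⟩ := exists_ι_mul_gammaProd_eq_smul_symmDiff
      (fun i hi => horth a i hi.symm) (hnorm a) (s ∆ T)
    refine ⟨κ * κ', mul_eq_one_or_neg_one hκ hκ', ?_⟩
    rw [gammaProd_insert_of_forall_lt ha, mul_assoc, hs, mul_smul_comm, ha', smul_smul,
      Finset.insert_eq_singleton_symmDiff fun h => (ha a h).false, symmDiff_assoc]
end

section
/- For all finite subsets S, T of Fin N, the ℤ₂^N-graded bracket of Clifford monomials closes as follows: γ_S · γ_T - (-1)^{|S ∩ T|} · γ_T · γ_S = (1 - (-1)^{|S|·|T|}) · γ_S · γ_T in Cl(Q). -/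
open Finset CliffordAlgebra

theorem List.mul_prod_map_eq_smul {ι K A : Type*} [Monoid K] [Monoid A] [MulAction K A]
    [IsScalarTower K A A] [SMulCommClass K A A] {a : A} {f : ι → A} {s : ι → K} {l : List ι}
    (h : ∀ j ∈ l, a * f j = s j • (f j * a)) :
    a * (l.map f).prod = (l.map s).prod • ((l.map f).prod * a) := by
  induction l with
  | nil => simp
  | cons j l ih =>
    simp only [List.map_cons, List.prod_cons, List.forall_mem_cons] at h ⊢
    rw [← mul_assoc, h.1, smul_mul_assoc, mul_assoc, ih h.2, mul_smul_comm, smul_smul, mul_assoc]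

theorem List.prod_map_mul_prod_map_eq_smul {ι K A : Type*} [CommMonoid K] [Monoid A]
    [MulAction K A] [IsScalarTower K A A] [SMulCommClass K A A] {f : ι → A} {s : ι → ι → K}
    {l l' : List ι}
    (h : ∀ i ∈ l, ∀ j ∈ l', f i * f j = s i j • (f j * f i)) :
    (l.map f).prod * (l'.map f).prod =
      (l.map fun i => (l'.map (s i)).prod).prod • ((l'.map f).prod * (l.map f).prod) := by
  induction l with
  | nil => simp
  | cons i l ih =>
    simp only [List.map_cons, List.prod_cons, List.forall_mem_cons] at h ⊢
    rw [mul_assoc, ih h.2, mul_smul_comm, ← mul_assoc, List.mul_prod_map_eq_smul h.1,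
      smul_mul_assoc, smul_smul, mul_assoc, mul_comm]

theorem Finset.prod_map_sort {ι M : Type*} [CommMonoid M] (r : ι → ι → Prop) [DecidableRel r]
    [IsTrans ι r] [Std.Antisymm r] [Std.Total r] (s : Finset ι) (f : ι → M) :
    ((s.sort r).map f).prod = ∏ i ∈ s, f i := by
  rw [← prod_map_toList]
  exact ((s.sort_perm_toList r).map f).prod_eq

theorem Finset.neg_one_pow_card_inter_mul_prod_prod_ite_eq {ι R : Type*} [DecidableEq ι]
    [CommMonoid R] [HasDistribNeg R] (S T : Finset ι) :
    (-1) ^ (S ∩ T).card * ∏ i ∈ S, ∏ j ∈ T, (if i = j then 1 else -1 : R) =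
      (-1) ^ (S.card * T.card) := by
  -- one `-1` for every pair `(i, j)`, undone by a second one on the diagonal `S ∩ T`
  have hsign : ∀ i j : ι, (if i = j then 1 else -1 : R) = -1 * if i = j then -1 else 1 := by
    intro i j; split_ifs <;> simp only [neg_mul_neg, mul_one]
  simp_rw [hsign, prod_mul_distrib, prod_const, prod_ite_eq T _ fun _ => (-1 : R), prod_ite_mem,
    prod_const, ← pow_mul]
  rw [mul_left_comm, ← mul_pow, neg_mul_neg, mul_one, one_pow, mul_one, mul_comm]

theorem gammaProd_mul_gammaProd_eq_smul {R M : Type*} [CommRing R] [AddCommGroup M] [Module R M]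
    (Q : QuadraticForm R M) {N : ℕ} (e : Fin N → M)
    (horth : ∀ i j : Fin N, i ≠ j → QuadraticMap.polar Q (e i) (e j) = 0)
    (S T : Finset (Fin N)) :
    gammaProd Q e S * gammaProd Q e T =
      (∏ i ∈ S, ∏ j ∈ T, if i = j then 1 else -1 : ℤ) • (gammaProd Q e T * gammaProd Q e S) := by
  have hanti : ∀ i j, ι Q (e i) * ι Q (e j) =
      (if i = j then 1 else -1 : ℤ) • (ι Q (e j) * ι Q (e i)) := by
    intro i j
    split_ifs with hij
    · rw [hij, one_smul]
    · rw [ι_mul_ι_comm_of_isOrtho (QuadraticMap.isOrtho_polarBilin.mp (horth i j hij)),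
        neg_one_zsmul]
  unfold gammaProd
  rw [List.prod_map_mul_prod_map_eq_smul fun i _ j _ => hanti i j]
  simp only [prod_map_sort]

/-- closure of the ℤ₂^N graded bracket:
`γ_S·γ_T - (-1)^{|S ∩ T|}·γ_T·γ_S = (1 - (-1)^{|S|·|T|})·γ_S·γ_T`. -/
theorem gammaProd_graded_bracket_closure {R M : Type*} [CommRing R] [AddCommGroup M]
    [Module R M] (Q : QuadraticForm R M) {N : ℕ} (e : Fin N → M)
    (horth : ∀ i j : Fin N, i ≠ j → QuadraticMap.polar Q (e i) (e j) = 0)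
    (S T : Finset (Fin N)) :
    gammaProd Q e S * gammaProd Q e T -
        ((-1 : ℤ) ^ (S ∩ T).card) • (gammaProd Q e T * gammaProd Q e S) =
      ((1 - (-1 : ℤ) ^ (S.card * T.card))) • (gammaProd Q e S * gammaProd Q e T) := by
  rw [gammaProd_mul_gammaProd_eq_smul Q e horth T S, smul_smul, inter_comm,
    neg_one_pow_card_inter_mul_prod_prod_ite_eq, mul_comm T.card, sub_smul, one_smul]
end

section
/- The ℤ₂^N graded Jacobi identity holds for Clifford monomials: for all finite subsets S, T, U of Fin N, writing ⟦x, y⟧_s := x·y - (-1)^s · y·x for x, y ∈ Cl(Q) and s ∈ ℤ, one has (-1)^{|S ∩ U|} · ⟦γ_S, ⟦γ_T, γ_U⟧_{|T ∩ U|}⟧_{|S ∩ T| + |S ∩ U|} + (-1)^{|T ∩ S|} · ⟦γ_T, ⟦γ_U, γ_S⟧_{|U ∩ S|}⟧_{|T ∩ U| + |T ∩ S|} + (-1)^{|U ∩ T|} · ⟦γ_U, ⟦γ_S, γ_T⟧_{|S ∩ T|}⟧_{|U ∩ S| + |U ∩ T|} = 0. -/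
/-- The ℤ₂^N graded bracket `⟦x, y⟧_s := x·y - (-1)^s · y·x` for `s ∈ ℤ`. -/
noncomputable def gBracket {A : Type*} [Ring A] (s : ℤ) (x y : A) : A :=
  x * y - (((-1 : ℤˣ) ^ s : ℤˣ) : ℤ) • (y * x)

section GradedBracket

variable {A : Type*} [Ring A]

theorem gBracket_natCast (n : ℕ) (x y : A) :
    gBracket n x y = x * y - (-1 : ℤ) ^ n • (y * x) := by
  simp [gBracket]

theorem gBracket_natCast_add (m n : ℕ) (x y : A) :
    gBracket ((m : ℤ) + n) x y = x * y - ((-1 : ℤ) ^ m * (-1) ^ n) • (y * x) := by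
  rw [← Nat.cast_add, gBracket_natCast, pow_add]

theorem gBracket_jacobi_of_mul_eq_smul {x y z : A} {α β γ : ℤ} (hxy : y * x = α • (x * y))
    (hyz : z * y = β • (y * z)) (hxz : z * x = γ • (x * z)) (a b c : ℕ) :
    (-1 : ℤ) ^ c • gBracket ((a : ℤ) + c) x (gBracket b y z) +
      (-1 : ℤ) ^ a • gBracket ((b : ℤ) + a) y (gBracket c z x) +
      (-1 : ℤ) ^ b • gBracket ((c : ℤ) + b) z (gBracket a x y) = 0 := by
  have hxzy : x * z * y = β • (x * y * z) := by
    rw [mul_assoc, hyz, mul_smul_comm, mul_assoc]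
  have hyxz : y * x * z = α • (x * y * z) := by
    rw [hxy, smul_mul_assoc]
  have hyzx : y * z * x = (γ * α) • (x * y * z) := by
    rw [mul_assoc, hxz, mul_smul_comm, ← mul_assoc, hyxz, smul_smul]
  have hzxy : z * x * y = (γ * β) • (x * y * z) := by
    rw [hxz, smul_mul_assoc, hxzy, smul_smul]
  have hzyx : z * y * x = (β * (γ * α)) • (x * y * z) := by
    rw [hyz, smul_mul_assoc, hyzx, smul_smul]
  simp only [gBracket_natCast, gBracket_natCast_add, mul_sub, sub_mul, mul_smul_comm,
    smul_mul_assoc, ← mul_assoc, hxzy, hyxz, hyzx, hzxy, hzyx]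
  have hu : (-1 : ℤ) ^ a * (-1) ^ a = 1 := pow_mul_pow_eq_one a rfl
  have hv : (-1 : ℤ) ^ b * (-1) ^ b = 1 := pow_mul_pow_eq_one b rfl
  have hw : (-1 : ℤ) ^ c * (-1) ^ c = 1 := pow_mul_pow_eq_one c rfl
  generalize (-1 : ℤ) ^ a = u at hu ⊢
  generalize (-1 : ℤ) ^ b = v at hv ⊢
  generalize (-1 : ℤ) ^ c = w at hw ⊢
  match_scalars
  linear_combination (-u * γ * α + u * v * α * β * γ) * hw + (-v * γ * β + v * w * β) * hu
    + (-w + u * w * α) * hv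

end GradedBracket

namespace CliffordAlgebra

variable {R M κ : Type*} [CommRing R] [AddCommGroup M] [Module R M] {Q : QuadraticForm R M}
  {e : κ → M} [DecidableEq κ]

theorem ι_mul_prod_map_ι_of_pairwise_polar
    (horth : Pairwise fun i j => QuadraticMap.polar Q (e i) (e j) = 0) (j : κ) (l : List κ) :
    ι Q (e j) * (l.map fun i => ι Q (e i)).prod =
      (-1 : ℤ) ^ (l.length + l.count j) • ((l.map fun i => ι Q (e i)).prod * ι Q (e j)) := by
  induction l with
  | nil => simp
  | cons i l ih =>
    simp only [List.map_cons, List.prod_cons]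
    rcases eq_or_ne i j with rfl | hij
    · rw [mul_assoc, ih, mul_smul_comm, ← mul_assoc, List.length_cons, List.count_cons_self,
        show l.length + 1 + (l.count i + 1) = l.length + l.count i + 2 by ring,
        pow_add _ _ 2, neg_one_sq, mul_one]
    · have hanti : ι Q (e j) * ι Q (e i) = -(ι Q (e i) * ι Q (e j)) :=
        ι_mul_ι_comm_of_isOrtho (QuadraticMap.isOrtho_polarBilin.mp (horth hij.symm))
      rw [← mul_assoc, hanti, neg_mul, mul_assoc, ih, mul_smul_comm, ← mul_assoc, ← neg_smul,
        List.length_cons, List.count_cons_of_ne hij,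
        show l.length + 1 + l.count j = l.length + l.count j + 1 by ring, pow_succ, mul_neg_one,
        neg_smul]

theorem prod_map_ι_mul_prod_map_ι_of_pairwise_polar
    (horth : Pairwise fun i j => QuadraticMap.polar Q (e i) (e j) = 0) (l m : List κ) :
    (l.map fun i => ι Q (e i)).prod * (m.map fun i => ι Q (e i)).prod =
      (-1 : ℤ) ^ (l.length * m.length + (l.map m.count).sum) •
        ((m.map fun i => ι Q (e i)).prod * (l.map fun i => ι Q (e i)).prod) := by
  induction l with
  | nil => simp
  | cons j l ih =>
    simp only [List.map_cons, List.prod_cons, List.sum_cons, List.length_cons]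
    rw [mul_assoc, ih, mul_smul_comm, ← mul_assoc, ι_mul_prod_map_ι_of_pairwise_polar horth,
      smul_mul_assoc, smul_smul, mul_assoc, ← pow_add]
    congr 2
    ring

end CliffordAlgebra

theorem Finset.sum_map_count_sort {κ : Type*} [LinearOrder κ] (S T : Finset κ) :
    ((S.sort (· ≤ ·)).map (T.sort (· ≤ ·)).count).sum = (S ∩ T).card := by
  rw [← Multiset.sum_coe, ← Multiset.map_coe, Finset.sort_eq, ← Finset.sum_eq_multiset_sum,
    ← Finset.filter_mem_eq_inter, Finset.card_filter]
  refine Finset.sum_congr rfl fun j _ => ?_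
  rw [← Multiset.coe_count, Finset.sort_eq, Multiset.count_eq_of_nodup T.nodup]
  rfl

theorem gammaProd_mul_gammaProd {R M : Type*} [CommRing R] [AddCommGroup M] [Module R M]
    {Q : QuadraticForm R M} {N : ℕ} {e : Fin N → M}
    (horth : Pairwise fun i j => QuadraticMap.polar Q (e i) (e j) = 0) (S T : Finset (Fin N)) :
    gammaProd Q e S * gammaProd Q e T =
      (-1 : ℤ) ^ (S.card * T.card + (S ∩ T).card) • (gammaProd Q e T * gammaProd Q e S) := by
  rw [gammaProd, gammaProd, CliffordAlgebra.prod_map_ι_mul_prod_map_ι_of_pairwise_polar horth,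
    Finset.length_sort, Finset.length_sort, Finset.sum_map_count_sort]

/-- the ℤ₂^N graded Jacobi identity for Clifford monomials. -/
theorem gammaProd_graded_jacobi {R M : Type*} [CommRing R] [AddCommGroup M]
    [Module R M] (Q : QuadraticForm R M) {N : ℕ} (e : Fin N → M)
    (horth : ∀ i j : Fin N, i ≠ j → QuadraticMap.polar Q (e i) (e j) = 0)
    (S T U : Finset (Fin N)) :
    ((-1 : ℤ) ^ (S ∩ U).card) •
        gBracket (((S ∩ T).card : ℤ) + ((S ∩ U).card : ℤ)) (gammaProd Q e S)
          (gBracket ((T ∩ U).card : ℤ) (gammaProd Q e T) (gammaProd Q e U)) +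
      ((-1 : ℤ) ^ (T ∩ S).card) •
        gBracket (((T ∩ U).card : ℤ) + ((T ∩ S).card : ℤ)) (gammaProd Q e T)
          (gBracket ((U ∩ S).card : ℤ) (gammaProd Q e U) (gammaProd Q e S)) +
      ((-1 : ℤ) ^ (U ∩ T).card) •
        gBracket (((U ∩ S).card : ℤ) + ((U ∩ T).card : ℤ)) (gammaProd Q e U)
          (gBracket ((S ∩ T).card : ℤ) (gammaProd Q e S) (gammaProd Q e T)) = 0 := by
  rw [Finset.inter_comm T S, Finset.inter_comm U S, Finset.inter_comm U T]
  exact gBracket_jacobi_of_mul_eq_smul (gammaProd_mul_gammaProd horth T S)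
    (gammaProd_mul_gammaProd horth U T) (gammaProd_mul_gammaProd horth U S) _ _ _
end

section
/- Let S, T, U be finite subsets of Fin N and let T_a, T_b, T_c ∈ A be homogeneous with T_a ∈ 𝒜(|S| mod 2), T_b ∈ 𝒜(|T| mod 2), T_c ∈ 𝒜(|U| mod 2). Writing X_S := γ_S ⊗ T_a, X_T := γ_T ⊗ T_b, X_U := γ_U ⊗ T_c, and ⟦x, y⟧_s := x·y - (-1)^s · y·x, the nested graded bracket reduces to the nested supercommutator: ⟦X_S, ⟦X_T, X_U⟧_{|T ∩ U|}⟧_{|S ∩ T| + |S ∩ U|} = (γ_S·γ_T·γ_U) ⊗ (T_a·B - (-1)^{|S|·(|T|+|U|)} · B·T_a), where B := T_b·T_c - (-1)^{|T|·|U|} · T_c·T_b. -/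
open TensorProduct

/-!
Orthogonal vectors anticommute in `Cl(Q)`, so moving `γ_S` past `γ_T` costs one sign for every
pair `(i, j) ∈ S × T` with `i ≠ j`, i.e. `γ_T γ_S = (-1)^(|S||T| + |S ∩ T|) γ_S γ_T`. In
`Cl(Q) ⊗ A` the factors multiply separately, so the Clifford sign cancels the `|S ∩ T|` part of the
bracket's sign and leaves the supercommutator sign `(-1)^(|S||T|)` on the `A` factor. Applying this
to the inner bracket, and then to the outer one with `γ_T γ_U` in place of `γ_T`, gives the
theorem.
-/

section Anticommuting

variable {ι B : Type*} [Ring B] [DecidableEq ι] {f : ι → B}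

theorem mul_list_prod_map_of_anticomm (hf : ∀ i j, i ≠ j → f i * f j = -(f j * f i))
    (i : ι) (l : List ι) :
    f i * (l.map f).prod = (-1 : ℤ) ^ l.countP (· ≠ i) • ((l.map f).prod * f i) := by
  induction l with
  | nil => simp
  | cons j l ih =>
    rw [List.map_cons, List.prod_cons]
    rcases eq_or_ne j i with rfl | hji
    · conv_lhs => rw [ih, mul_smul_comm, ← mul_assoc]
      rw [List.countP_cons_of_neg (by simp)]
    · rw [← mul_assoc, hf i j hji.symm, neg_mul, mul_assoc, ih, mul_smul_comm, ← mul_assoc,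
        List.countP_cons_of_pos (by simpa using hji), pow_succ, mul_smul, neg_one_smul, smul_neg]

theorem list_prod_map_mul_list_prod_map_of_anticomm
    (hf : ∀ i j, i ≠ j → f i * f j = -(f j * f i)) (l l' : List ι) :
    (l.map f).prod * (l'.map f).prod =
      (-1 : ℤ) ^ (l.map fun i => l'.countP (· ≠ i)).sum • ((l'.map f).prod * (l.map f).prod) := by
  induction l with
  | nil => simp
  | cons i l ih =>
    rw [List.map_cons, List.prod_cons, mul_assoc, ih, mul_smul_comm, ← mul_assoc,
      mul_list_prod_map_of_anticomm hf, smul_mul_assoc, smul_smul, ← pow_add, mul_assoc,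
      List.map_cons, List.sum_cons, add_comm]

end Anticommuting

section Counting

open Finset

theorem Finset.countP_sort {α : Type*} [LinearOrder α] (s : Finset α) (p : α → Prop)
    [DecidablePred p] :
    (s.sort (· ≤ ·)).countP (fun a => decide (p a)) = #(s.filter p) := by
  rw [← Multiset.coe_countP, sort_eq, Multiset.countP_eq_card_filter]
  rfl

theorem Finset.sum_card_erase_add_card_inter {α : Type*} [DecidableEq α] (s t : Finset α) :
    ∑ i ∈ t, #(s.erase i) + #(s ∩ t) = #s * #t := by
  have h (i : α) : #(s.erase i) + (if i ∈ s then 1 else 0) = #s := by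
    split_ifs with hi
    · exact card_erase_add_one hi
    · rw [erase_eq_of_notMem hi, add_zero]
  rw [inter_comm, ← filter_mem_eq_inter, card_filter, ← sum_add_distrib,
    sum_congr rfl fun i _ => h i, sum_const, smul_eq_mul, mul_comm]

end Counting

theorem neg_one_pow_eq_neg_one_pow_add_of_add_eq {a b c : ℕ} (h : a + c = b) :
    (-1 : ℤ) ^ a = (-1) ^ (b + c) := by
  rw [← h, add_assoc, ← two_mul, pow_add, pow_mul]
  simp

theorem mul_mul_eq_neg_one_pow_smul_of_swap {B : Type*} [Ring B] {a b c : B} {m n : ℕ}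
    (hb : b * a = (-1 : ℤ) ^ m • (a * b)) (hc : c * a = (-1 : ℤ) ^ n • (a * c)) :
    b * c * a = (-1 : ℤ) ^ (m + n) • (a * (b * c)) := by
  rw [mul_assoc, hc, mul_smul_comm, ← mul_assoc, hb, smul_mul_assoc, smul_smul, ← pow_add,
    mul_assoc, add_comm]

open Finset in
theorem gammaProd_mul_gammaProd_swap {R M : Type*} [CommRing R] [AddCommGroup M] [Module R M]
    (Q : QuadraticForm R M) {N : ℕ} (e : Fin N → M)
    (horth : ∀ i j : Fin N, i ≠ j → QuadraticMap.polar Q (e i) (e j) = 0)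
    (S T : Finset (Fin N)) :
    gammaProd Q e T * gammaProd Q e S =
      (-1 : ℤ) ^ (#S * #T + #(S ∩ T)) • (gammaProd Q e S * gammaProd Q e T) := by
  have hanti (i j : Fin N) (hij : i ≠ j) :
      CliffordAlgebra.ι Q (e i) * CliffordAlgebra.ι Q (e j) =
        -(CliffordAlgebra.ι Q (e j) * CliffordAlgebra.ι Q (e i)) :=
    CliffordAlgebra.ι_mul_ι_comm_of_isOrtho (QuadraticMap.isOrtho_polarBilin.mp (horth i j hij))
  have hexp : ((T.sort (· ≤ ·)).map fun i => (S.sort (· ≤ ·)).countP (· ≠ i)).sum =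
      ∑ i ∈ T, #(S.erase i) := by
    rw [sum_eq_multiset_sum, ← sort_eq T (· ≤ ·), Multiset.map_coe, Multiset.sum_coe]
    simp only [countP_sort, filter_ne']
  rw [gammaProd, gammaProd, list_prod_map_mul_list_prod_map_of_anticomm hanti, hexp,
    neg_one_pow_eq_neg_one_pow_add_of_add_eq (sum_card_erase_add_card_inter S T)]

theorem tmul_gBracket_tmul {R B A : Type*} [CommRing R] [Ring B] [Algebra R B] [Ring A]
    [Algebra R A] {g₁ g₂ : B} {n m : ℕ} (h : g₂ * g₁ = (-1 : ℤ) ^ (n + m) • (g₁ * g₂))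
    (x y : A) :
    gBracket m (g₁ ⊗ₜ[R] x) (g₂ ⊗ₜ[R] y) = (g₁ * g₂) ⊗ₜ[R] (x * y - (-1 : ℤ) ^ n • (y * x)) := by
  have hsign : (((-1 : ℤˣ) ^ (m : ℤ) : ℤˣ) : ℤ) * (-1) ^ (n + m) = (-1) ^ n := by
    rw [zpow_natCast, Units.val_pow_eq_pow_val, Units.val_neg, Units.val_one, ← pow_add,
      add_comm m, neg_one_pow_eq_neg_one_pow_add_of_add_eq (b := n + m) rfl]
  rw [gBracket, Algebra.TensorProduct.tmul_mul_tmul, Algebra.TensorProduct.tmul_mul_tmul, h,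
    smul_tmul', smul_smul, hsign, tmul_sub, tmul_smul, ← smul_tmul']

theorem tensor_nested_graded_bracket_general {R M : Type*} [CommRing R] [AddCommGroup M] [Module R M]
    (Q : QuadraticForm R M) {N : ℕ} (e : Fin N → M)
    (horth : ∀ i j : Fin N, i ≠ j → QuadraticMap.polar Q (e i) (e j) = 0)
    (A : Type*) [Ring A] [Algebra R A]
    (S T U : Finset (Fin N)) (Ta Tb Tc : A) :
    gBracket (((S ∩ T).card : ℤ) + ((S ∩ U).card : ℤ)) (gammaProd Q e S ⊗ₜ[R] Ta)
        (gBracket ((T ∩ U).card : ℤ) (gammaProd Q e T ⊗ₜ[R] Tb)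
          (gammaProd Q e U ⊗ₜ[R] Tc)) =
      (gammaProd Q e S * gammaProd Q e T * gammaProd Q e U) ⊗ₜ[R]
        (Ta * (Tb * Tc - ((-1 : ℤ) ^ (T.card * U.card)) • (Tc * Tb)) -
          ((-1 : ℤ) ^ (S.card * (T.card + U.card))) •
            ((Tb * Tc - ((-1 : ℤ) ^ (T.card * U.card)) • (Tc * Tb)) * Ta)) := by
  have hTU := gammaProd_mul_gammaProd_swap Q e horth T U
  have hS : gammaProd Q e T * gammaProd Q e U * gammaProd Q e S =
      (-1 : ℤ) ^ (S.card * (T.card + U.card) + ((S ∩ T).card + (S ∩ U).card)) •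
        (gammaProd Q e S * (gammaProd Q e T * gammaProd Q e U)) := by
    rw [mul_add, add_add_add_comm]
    exact mul_mul_eq_neg_one_pow_smul_of_swap (gammaProd_mul_gammaProd_swap Q e horth S T)
      (gammaProd_mul_gammaProd_swap Q e horth S U)
  rw [← Nat.cast_add, tmul_gBracket_tmul hTU, tmul_gBracket_tmul hS, mul_assoc]

/-- the nested ℤ₂^N graded bracket in `Cl(Q) ⊗ A` reduces to the nested
supercommutator of the second factors. -/
theorem tensor_nested_graded_bracket {R M : Type*} [CommRing R] [AddCommGroup M] [Module R M]
    (Q : QuadraticForm R M) {N : ℕ} (e : Fin N → M)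
    (horth : ∀ i j : Fin N, i ≠ j → QuadraticMap.polar Q (e i) (e j) = 0)
    (A : Type*) [Ring A] [Algebra R A] (𝒜 : ZMod 2 → Submodule R A) [GradedAlgebra 𝒜]
    (S T U : Finset (Fin N)) (Ta Tb Tc : A)
    (hTa : Ta ∈ 𝒜 ((S.card : ZMod 2))) (hTb : Tb ∈ 𝒜 ((T.card : ZMod 2)))
    (hTc : Tc ∈ 𝒜 ((U.card : ZMod 2))) :
    gBracket (((S ∩ T).card : ℤ) + ((S ∩ U).card : ℤ)) (gammaProd Q e S ⊗ₜ[R] Ta)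
        (gBracket ((T ∩ U).card : ℤ) (gammaProd Q e T ⊗ₜ[R] Tb)
          (gammaProd Q e U ⊗ₜ[R] Tc)) =
      (gammaProd Q e S * gammaProd Q e T * gammaProd Q e U) ⊗ₜ[R]
        (Ta * (Tb * Tc - ((-1 : ℤ) ^ (T.card * U.card)) • (Tc * Tb)) -
          ((-1 : ℤ) ^ (S.card * (T.card + U.card))) •
            ((Tb * Tc - ((-1 : ℤ) ^ (T.card * U.card)) • (Tc * Tb)) * Ta)) :=
  tensor_nested_graded_bracket_general Q e horth A S T U Ta Tb Tc
end

section
/- For all indices i, j, k in Fin n, the (0,0)-(1,0) sector relations hold: [A_ij, β†_k] = δ_ik · β_j + δ_jk · β_i, [A†_ij, β_k] = -δ_ik · β†_j - δ_jk · β†_i, [N_ij, β_k] = -δ_ik · β_j, and [N_ij, β†_k] = δ_jk · β†_i. -/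
/-! Because `F` commutes with every `a_i` and `a†_i`, each `β_k` is the plain product `a_k F`
and each quadratic element `X` (`A_ij`, `A†_ij` or `N_ij`) commutes with `F`, so
`[X, b F] = [X, b] F`. For a symmetrized product the Leibniz rule gives
`[½{x, y}, z] = [x, z] y + [y, z] x` as soon as `[x, z]` and `[y, z]` are central, and the
canonical commutation relations make them the scalars `δ`, `-δ` or `0`. -/

/-- `A_ij := ½{a_i, a_j}` (also used for `A†_ij := ½{a†_i, a†_j}`). -/
noncomputable def bosonA {R : Type*} [Ring R] [Algebra ℚ R] {n : ℕ}
    (a : Fin n → R) (i j : Fin n) : R :=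
  (1 / 2 : ℚ) • (a i * a j + a j * a i)

/-- `N_ij := ½{a†_i, a_j}`. -/
noncomputable def bosonN {R : Type*} [Ring R] [Algebra ℚ R] {n : ℕ}
    (ad a : Fin n → R) (i j : Fin n) : R :=
  (1 / 2 : ℚ) • (ad i * a j + a j * ad i)

/-- `β_i := ½{a_i, F}`. -/
noncomputable def bosonBeta {R : Type*} [Ring R] [Algebra ℚ R] {n : ℕ}
    (a : Fin n → R) (F : R) (i : Fin n) : R :=
  (1 / 2 : ℚ) • (a i * F + F * a i)

section SymProd

variable {R : Type*} [Ring R] [Algebra ℚ R]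

noncomputable def symProd (x y : R) : R :=
  (1 / 2 : ℚ) • (x * y + y * x)

theorem symProd_eq_mul {x y : R} (h : Commute x y) : symProd x y = x * y := by
  rw [symProd, ← h.eq, ← two_smul ℚ, smul_smul]
  norm_num

theorem Commute.symProd_left {x y w : R} (hx : Commute x w) (hy : Commute y w) :
    Commute (symProd x y) w :=
  ((hx.mul_left hy).add_left (hy.mul_left hx)).smul_left _

omit [Algebra ℚ R] in
theorem mul_lie (x y z : R) : ⁅x * y, z⁆ = x * ⁅y, z⁆ + ⁅x, z⁆ * y := by
  simp only [Ring.lie_def]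
  noncomm_ring

omit [Algebra ℚ R] in
theorem lie_mul_of_commute {x y w : R} (h : Commute x w) : ⁅x, y * w⁆ = ⁅x, y⁆ * w := by
  rw [Ring.lie_def, Ring.lie_def, sub_mul, mul_assoc y w x, ← h.eq, ← mul_assoc, ← mul_assoc]

theorem symProd_lie {x y z : R} (hxz : Commute ⁅x, z⁆ y) (hyz : Commute ⁅y, z⁆ x) :
    ⁅symProd x y, z⁆ = ⁅x, z⁆ * y + ⁅y, z⁆ * x := by
  have h : ⁅x * y + y * x, z⁆ = x * ⁅y, z⁆ + ⁅x, z⁆ * y + (y * ⁅x, z⁆ + ⁅y, z⁆ * x) := by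
    rw [← mul_lie, ← mul_lie]
    simp only [Ring.lie_def]
    noncomm_ring
  rw [symProd, Ring.lie_def, smul_mul_assoc, mul_smul_comm, ← smul_sub, ← Ring.lie_def, h,
    ← hxz.eq, ← hyz.eq]
  module

theorem symProd_lie_mul {x y z w : R} (hx : Commute x w) (hy : Commute y w)
    (hxz : Commute ⁅x, z⁆ y) (hyz : Commute ⁅y, z⁆ x) :
    ⁅symProd x y, z * w⁆ = (⁅x, z⁆ * y + ⁅y, z⁆ * x) * w := by
  rw [lie_mul_of_commute (hx.symProd_left hy), symProd_lie hxz hyz]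

end SymProd

theorem commute_ite_one_zero {R : Type*} [Ring R] (p : Prop) [Decidable p] (x : R) :
    Commute (if p then 1 else 0) x := by
  split_ifs
  exacts [.one_left x, .zero_left x]

section Boson

variable {R : Type*} [Ring R] [Algebra ℚ R] {n : ℕ}

theorem bosonA_eq_symProd (a : Fin n → R) (i j : Fin n) :
    bosonA a i j = symProd (a i) (a j) := rfl

theorem bosonN_eq_symProd (ad a : Fin n → R) (i j : Fin n) :
    bosonN ad a i j = symProd (ad i) (a j) := rfl

theorem bosonBeta_eq_mul {a : Fin n → R} {F : R} {i : Fin n} (h : Commute F (a i)) :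
    bosonBeta a F i = a i * F :=
  symProd_eq_mul h.symm

end Boson

theorem boson_zero_zero_one_zero_sector_general {R : Type*} [Ring R] [Algebra ℚ R] {n : ℕ}
    (a ad : Fin n → R) (F : R)
    (haa : ∀ i j, a i * a j = a j * a i)
    (hadad : ∀ i j, ad i * ad j = ad j * ad i)
    (haad : ∀ i j, a i * ad j - ad j * a i = if i = j then 1 else 0)
    (hFa : ∀ i, F * a i = a i * F)
    (hFad : ∀ i, F * ad i = ad i * F)
    (i j k : Fin n) :
    (bosonA a i j * bosonBeta ad F k - bosonBeta ad F k * bosonA a i j =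
        (if i = k then bosonBeta a F j else 0) + (if j = k then bosonBeta a F i else 0)) ∧
      (bosonA ad i j * bosonBeta a F k - bosonBeta a F k * bosonA ad i j =
        -(if i = k then bosonBeta ad F j else 0) - (if j = k then bosonBeta ad F i else 0)) ∧
      (bosonN ad a i j * bosonBeta a F k - bosonBeta a F k * bosonN ad a i j =
        -(if i = k then bosonBeta a F j else 0)) ∧
      (bosonN ad a i j * bosonBeta ad F k - bosonBeta ad F k * bosonN ad a i j =
        (if j = k then bosonBeta ad F i else 0)) := by
  have lie_a_a (p q : Fin n) : ⁅a p, a q⁆ = 0 := Commute.lie_eq (haa p q)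
  have lie_ad_ad (p q : Fin n) : ⁅ad p, ad q⁆ = 0 := Commute.lie_eq (hadad p q)
  have lie_a_ad (p q : Fin n) : ⁅a p, ad q⁆ = if p = q then 1 else 0 := haad p q
  have lie_ad_a (p q : Fin n) : ⁅ad p, a q⁆ = -(if p = q then 1 else 0) := by
    rw [Ring.lie_def, ← neg_sub, haad q p]
    simp only [@eq_comm _ q p]
  have central_a_ad (p q : Fin n) (x : R) : Commute ⁅a p, ad q⁆ x :=
    lie_a_ad p q ▸ commute_ite_one_zero _ x
  have central_ad_a (p q : Fin n) (x : R) : Commute ⁅ad p, a q⁆ x :=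
    lie_ad_a p q ▸ (commute_ite_one_zero _ x).neg_left
  have hβ (m : Fin n) : bosonBeta a F m = a m * F := bosonBeta_eq_mul (hFa m)
  have hβd (m : Fin n) : bosonBeta ad F m = ad m * F := bosonBeta_eq_mul (hFad m)
  simp only [hβ, hβd, ← Ring.lie_def, bosonA_eq_symProd, bosonN_eq_symProd]
  refine ⟨?_, ?_, ?_, ?_⟩
  · rw [symProd_lie_mul (hFa i).symm (hFa j).symm (central_a_ad ..) (central_a_ad ..),
      lie_a_ad, lie_a_ad]
    simp [ite_mul, add_mul]
  · rw [symProd_lie_mul (hFad i).symm (hFad j).symm (central_ad_a ..) (central_ad_a ..),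
      lie_ad_a, lie_ad_a]
    simp [ite_mul, add_mul, sub_eq_add_neg]
  · rw [symProd_lie_mul (hFad i).symm (hFa j).symm (central_ad_a ..)
      (lie_a_a j k ▸ .zero_left _), lie_ad_a, lie_a_a]
    simp [ite_mul]
  · rw [symProd_lie_mul (hFad i).symm (hFa j).symm (lie_ad_ad i k ▸ .zero_left _)
      (central_a_ad ..), lie_ad_ad, lie_a_ad]
    simp [ite_mul]

/-- the (0,0)-(1,0) sector relations:
`[A_ij, β†_k] = δ_ik β_j + δ_jk β_i`, `[A†_ij, β_k] = -δ_ik β†_j - δ_jk β†_i`,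
`[N_ij, β_k] = -δ_ik β_j`, `[N_ij, β†_k] = δ_jk β†_i`. -/
theorem boson_zero_zero_one_zero_sector {R : Type*} [Ring R] [Algebra ℚ R] {n : ℕ}
    (a ad : Fin n → R) (F : R)
    (haa : ∀ i j, a i * a j = a j * a i)
    (hadad : ∀ i j, ad i * ad j = ad j * ad i)
    (haad : ∀ i j, a i * ad j - ad j * a i = if i = j then 1 else 0)
    (hFF : F * F = 1)
    (hFa : ∀ i, F * a i = a i * F)
    (hFad : ∀ i, F * ad i = ad i * F)
    (i j k : Fin n) :
    (bosonA a i j * bosonBeta ad F k - bosonBeta ad F k * bosonA a i j =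
        (if i = k then bosonBeta a F j else 0) + (if j = k then bosonBeta a F i else 0)) ∧
      (bosonA ad i j * bosonBeta a F k - bosonBeta a F k * bosonA ad i j =
        -(if i = k then bosonBeta ad F j else 0) - (if j = k then bosonBeta ad F i else 0)) ∧
      (bosonN ad a i j * bosonBeta a F k - bosonBeta a F k * bosonN ad a i j =
        -(if i = k then bosonBeta a F j else 0)) ∧
      (bosonN ad a i j * bosonBeta ad F k - bosonBeta ad F k * bosonN ad a i j =
        (if j = k then bosonBeta ad F i else 0)) :=
  boson_zero_zero_one_zero_sector_general a ad F haa hadad haad hFa hFad i j k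
end

section
/- The ℤ₂ ⊗ ℤ₂ extended Grassmann numbers realized via the Clifford algebra supercommute with the correct color signs: for all u, v ∈ V, (i) {g₁ ⊗ ι(u), g₁ ⊗ ι(v)} = 0 and {g₂ ⊗ ι(u), g₂ ⊗ ι(v)} = 0 (two elements of degree (1,0), resp. two of degree (0,1), anticommute); (ii) [g₁ ⊗ ι(u), g₂ ⊗ ι(v)] = 0 (a degree (1,0) element commutes with a degree (0,1) element); (iii) {g₁ ⊗ ι(u), (g₁·g₂) ⊗ 1} = 0 and {g₂ ⊗ ι(u), (g₁·g₂) ⊗ 1} = 0 (degree (1,0) and (0,1) elements anticommute with the degree (1,1) element g₁g₂ ⊗ 1). Here all products are taken in Cl(Q) ⊗_ℝ Λ(V), [x, y] := x·y - y·x and {x, y} := x·y + y·x. -/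
/-!
In `A ⊗ B` the commutation factor of two pure tensors is the product of the commutation factors
of their components. Orthogonal vectors anticommute in `Cl(Q)`, hence so do `g₁` and `g₂` with
`g₁ g₂`, and any `ι u`, `ι v` anticommute in `Λ(V)`; each colour sign is thus a product of two
signs `±1`.
-/

open TensorProduct

namespace Algebra.TensorProduct

section Semiring

variable {R A B : Type*} [CommSemiring R] [Semiring A] [Algebra R A] [Semiring B] [Algebra R B]

theorem tmul_mul_tmul_eq_smul_mul_swap {a₁ a₂ : A} {b₁ b₂ : B} {r s : R}
    (ha : a₁ * a₂ = r • (a₂ * a₁)) (hb : b₁ * b₂ = s • (b₂ * b₁)) :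
    (a₁ ⊗ₜ[R] b₁) * (a₂ ⊗ₜ[R] b₂) = (r * s) • ((a₂ ⊗ₜ[R] b₂) * (a₁ ⊗ₜ[R] b₁)) := by
  rw [tmul_mul_tmul, tmul_mul_tmul, ha, hb, smul_tmul_smul]

end Semiring

section Ring

variable {R A B : Type*} [CommRing R] [Ring A] [Algebra R A] [Ring B] [Algebra R B]

theorem tmul_mul_tmul_add_swap_eq_zero {a₁ a₂ : A} {b₁ b₂ : B} {r s : R}
    (ha : a₁ * a₂ = r • (a₂ * a₁)) (hb : b₁ * b₂ = s • (b₂ * b₁)) (hrs : r * s = -1) :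
    (a₁ ⊗ₜ[R] b₁) * (a₂ ⊗ₜ[R] b₂) + (a₂ ⊗ₜ[R] b₂) * (a₁ ⊗ₜ[R] b₁) = 0 := by
  rw [tmul_mul_tmul_eq_smul_mul_swap ha hb, hrs, neg_one_smul, neg_add_cancel]

theorem tmul_mul_tmul_sub_swap_eq_zero {a₁ a₂ : A} {b₁ b₂ : B} {r s : R}
    (ha : a₁ * a₂ = r • (a₂ * a₁)) (hb : b₁ * b₂ = s • (b₂ * b₁)) (hrs : r * s = 1) :
    (a₁ ⊗ₜ[R] b₁) * (a₂ ⊗ₜ[R] b₂) - (a₂ ⊗ₜ[R] b₂) * (a₁ ⊗ₜ[R] b₁) = 0 := by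
  rw [tmul_mul_tmul_eq_smul_mul_swap ha hb, hrs, one_smul, sub_self]

end Ring

end Algebra.TensorProduct

theorem mul_mul_eq_smul_mul_mul_of_mul_eq_smul {R A : Type*} [CommSemiring R] [Semiring A]
    [Algebra R A] {a b : A} {r : R} (h : a * b = r • (b * a)) :
    a * (a * b) = r • (a * b * a) := by
  rw [mul_assoc, ← mul_smul_comm, ← h]

theorem mul_mul_eq_neg_one_smul_mul_mul_of_mul_eq_neg_one_smul {R A : Type*} [CommRing R]
    [Ring A] [Algebra R A] {a b : A} (h : a * b = (-1 : R) • (b * a)) :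
    b * (a * b) = (-1 : R) • (a * b * b) := by
  conv_rhs => rw [h, smul_mul_assoc, smul_smul, neg_one_mul, neg_neg, one_smul, mul_assoc]

theorem CliffordAlgebra.ι_mul_ι_eq_neg_one_smul_of_polar_eq_zero {R M : Type*} [CommRing R]
    [AddCommGroup M] [Module R M] {Q : QuadraticForm R M} {a b : M}
    (h : QuadraticMap.polar Q a b = 0) : ι Q a * ι Q b = (-1 : R) • (ι Q b * ι Q a) := by
  rw [neg_one_smul, ι_mul_ι_comm, h, map_zero, zero_sub]

theorem ExteriorAlgebra.ι_mul_ι_eq_neg_one_smul {R M : Type*} [CommRing R] [AddCommGroup M]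
    [Module R M] (x y : M) : ι R x * ι R y = (-1 : R) • (ι R y * ι R x) := by
  rw [neg_one_smul]
  exact eq_neg_of_add_eq_zero_left (ι_add_mul_swap x y)

/-- the ℤ₂⊗ℤ₂ extended Grassmann numbers realized in `Cl(Q) ⊗ Λ(V)`
supercommute with the correct color signs. -/
theorem extended_grassmann_color_relations {M : Type*} [AddCommGroup M] [Module ℝ M]
    (Q : QuadraticForm ℝ M) (g₁ g₂ : M) (horth : QuadraticMap.polar Q g₁ g₂ = 0)
    {V : Type*} [AddCommGroup V] [Module ℝ V] (u v : V) :
    ((CliffordAlgebra.ι Q g₁ ⊗ₜ[ℝ] ExteriorAlgebra.ι ℝ u) *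
          (CliffordAlgebra.ι Q g₁ ⊗ₜ[ℝ] ExteriorAlgebra.ι ℝ v) +
        (CliffordAlgebra.ι Q g₁ ⊗ₜ[ℝ] ExteriorAlgebra.ι ℝ v) *
          (CliffordAlgebra.ι Q g₁ ⊗ₜ[ℝ] ExteriorAlgebra.ι ℝ u) = 0) ∧
      ((CliffordAlgebra.ι Q g₂ ⊗ₜ[ℝ] ExteriorAlgebra.ι ℝ u) *
            (CliffordAlgebra.ι Q g₂ ⊗ₜ[ℝ] ExteriorAlgebra.ι ℝ v) +
          (CliffordAlgebra.ι Q g₂ ⊗ₜ[ℝ] ExteriorAlgebra.ι ℝ v) *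
            (CliffordAlgebra.ι Q g₂ ⊗ₜ[ℝ] ExteriorAlgebra.ι ℝ u) = 0) ∧
      ((CliffordAlgebra.ι Q g₁ ⊗ₜ[ℝ] ExteriorAlgebra.ι ℝ u) *
            (CliffordAlgebra.ι Q g₂ ⊗ₜ[ℝ] ExteriorAlgebra.ι ℝ v) -
          (CliffordAlgebra.ι Q g₂ ⊗ₜ[ℝ] ExteriorAlgebra.ι ℝ v) *
            (CliffordAlgebra.ι Q g₁ ⊗ₜ[ℝ] ExteriorAlgebra.ι ℝ u) = 0) ∧
      ((CliffordAlgebra.ι Q g₁ ⊗ₜ[ℝ] ExteriorAlgebra.ι ℝ u) *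
            ((CliffordAlgebra.ι Q g₁ * CliffordAlgebra.ι Q g₂) ⊗ₜ[ℝ]
              (1 : ExteriorAlgebra ℝ V)) +
          ((CliffordAlgebra.ι Q g₁ * CliffordAlgebra.ι Q g₂) ⊗ₜ[ℝ]
              (1 : ExteriorAlgebra ℝ V)) *
            (CliffordAlgebra.ι Q g₁ ⊗ₜ[ℝ] ExteriorAlgebra.ι ℝ u) = 0) ∧
      ((CliffordAlgebra.ι Q g₂ ⊗ₜ[ℝ] ExteriorAlgebra.ι ℝ u) *
            ((CliffordAlgebra.ι Q g₁ * CliffordAlgebra.ι Q g₂) ⊗ₜ[ℝ]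
              (1 : ExteriorAlgebra ℝ V)) +
          ((CliffordAlgebra.ι Q g₁ * CliffordAlgebra.ι Q g₂) ⊗ₜ[ℝ]
              (1 : ExteriorAlgebra ℝ V)) *
            (CliffordAlgebra.ι Q g₂ ⊗ₜ[ℝ] ExteriorAlgebra.ι ℝ u) = 0) := by
  open Algebra.TensorProduct in
  have hg := CliffordAlgebra.ι_mul_ι_eq_neg_one_smul_of_polar_eq_zero horth
  have hΛ := ExteriorAlgebra.ι_mul_ι_eq_neg_one_smul (R := ℝ) u v
  have hself (x : CliffordAlgebra Q) : x * x = (1 : ℝ) • (x * x) := (one_smul ℝ _).symm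
  have hone : ExteriorAlgebra.ι ℝ u * 1 = (1 : ℝ) • (1 * ExteriorAlgebra.ι ℝ u) := by
    rw [one_smul, mul_one, one_mul]
  exact ⟨tmul_mul_tmul_add_swap_eq_zero (hself _) hΛ (one_mul _),
    tmul_mul_tmul_add_swap_eq_zero (hself _) hΛ (one_mul _),
    tmul_mul_tmul_sub_swap_eq_zero hg hΛ (by norm_num),
    tmul_mul_tmul_add_swap_eq_zero (mul_mul_eq_smul_mul_mul_of_mul_eq_smul hg) hone (mul_one _),
    tmul_mul_tmul_add_swap_eq_zero (mul_mul_eq_neg_one_smul_mul_mul_of_mul_eq_neg_one_smul hg)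
      hone (mul_one _)⟩
end
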